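/- arXiv:2401.07515 — 2 statements merged into one kernel-verified Lean document; each statement's English description precedes it below -/
import Mathlib

section
/- Let z_1,…,z_K and ẑ_1,…,ẑ_K be real numbers, and h_1,…,h_K, ĥ_1,…,ĥ_K be nonzero reals. Suppose Σ_j h_j z_j^s = Σ_j ĥ_j ẑ_j^s for all s = 0, 1, …, 2K. Then the multisets of pairs {(z_j, h_j')} and {(ẑ_j, ĥ_j')} agree, where coefficients of equal nodes are summed: for every real t, Σ_{j : z_j = t} h_j = Σ_{j : ẑ_j = t} ĥ_j. -/
open Finset Polynomial

/-!
Subtracting the two measures gives one signed measure on at most `2K` nodes whose moments of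
orders `0, …, 2K` vanish. Pairing it with the polynomial `∏_{u ≠ t} (X - u)` over the other
nodes (degree `< 2K`) kills every node except `t`, whose weight is therefore zero.
-/

theorem sum_mul_eval_eq_zero_of_sum_mul_pow_eq_zero {ι R : Type*} [CommSemiring R]
    (s : Finset ι) (x w : ι → R) (p : R[X])
    (hmom : ∀ k ≤ p.natDegree, ∑ i ∈ s, w i * x i ^ k = 0) :
    ∑ i ∈ s, w i * p.eval (x i) = 0 := by
  simp_rw [eval_eq_sum_range, mul_sum, mul_left_comm (w _)]
  rw [sum_comm]
  exact sum_eq_zero fun k hk => by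
    rw [← mul_sum, hmom k (Nat.lt_succ_iff.mp (mem_range.mp hk)), mul_zero]

theorem sum_filter_eq_zero_of_sum_mul_pow_eq_zero {ι R : Type*} [CommRing R] [IsDomain R]
    [DecidableEq R] (s : Finset ι) (x w : ι → R) (n : ℕ) (hcard : (s.image x).card ≤ n + 1)
    (hmom : ∀ k ≤ n, ∑ i ∈ s, w i * x i ^ k = 0) (t : R) :
    ∑ i ∈ s with x i = t, w i = 0 := by
  by_cases ht : t ∈ s.image x
  swap
  · refine sum_eq_zero fun i hi => absurd ?_ ht
    obtain ⟨his, rfl⟩ := mem_filter.mp hi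
    exact mem_image_of_mem x his
  set P : R[X] := ∏ u ∈ (s.image x).erase t, (X - C u)
  have hPdeg : P.natDegree ≤ n := by
    rw [natDegree_prod_of_monic _ _ fun u _ => monic_X_sub_C u]
    simp only [natDegree_X_sub_C, sum_const, smul_eq_mul, mul_one]
    rw [card_erase_of_mem ht]
    omega
  have hPeval : ∀ i ∈ s, w i * P.eval (x i) = if x i = t then w i * P.eval t else 0 := by
    intro i hi
    split_ifs with hxi
    · rw [hxi]
    · rw [eval_prod, prod_eq_zero (mem_erase.mpr ⟨hxi, mem_image_of_mem x hi⟩) (by simp),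
        mul_zero]
  have hPt : P.eval t ≠ 0 := by
    rw [eval_prod, prod_ne_zero_iff]
    intro u hu
    simpa [sub_eq_zero, eq_comm] using (mem_erase.mp hu).1
  have hpair := sum_mul_eval_eq_zero_of_sum_mul_pow_eq_zero s x w P
    fun k hk => hmom k (hk.trans hPdeg)
  rw [sum_congr rfl hPeval, ← sum_filter, ← sum_mul] at hpair
  exact (mul_eq_zero.mp hpair).resolve_right hPt

theorem stmt_5_general {K : ℕ} (z zhat : Fin K → ℝ) (h hhat : Fin K → ℝ)
    (hmom : ∀ s : ℕ, s ≤ 2 * K →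
      ∑ j, h j * z j ^ s = ∑ j, hhat j * zhat j ^ s) :
    ∀ t : ℝ,
      ∑ j ∈ Finset.univ.filter (fun j => z j = t), h j
        = ∑ j ∈ Finset.univ.filter (fun j => zhat j = t), hhat j := by
  intro t
  have hcard : (univ.image (Sum.elim z zhat)).card ≤ 2 * K + 1 :=
    card_image_le.trans (by simp only [card_univ, Fintype.card_sum, Fintype.card_fin]; omega)
  have hdiff := sum_filter_eq_zero_of_sum_mul_pow_eq_zero univ (Sum.elim z zhat)
    (Sum.elim h (-hhat)) (2 * K) hcard (fun k hk => by
      simp [Fintype.sum_sum_type, hmom k hk]) t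
  simp only [sum_filter, Fintype.sum_sum_type, Sum.elim_inl, Sum.elim_inr, Pi.neg_apply,
    ← sum_add_distrib] at hdiff
  rw [← sub_eq_zero, sum_filter, sum_filter, ← sum_sub_distrib]
  refine (sum_congr rfl fun j _ => ?_).trans hdiff
  by_cases hz : z j = t <;> by_cases hzhat : zhat j = t <;> simp [hz, hzhat, sub_eq_add_neg]

/-- Moment-matching uniqueness: two signed discrete measures supported on at
most `K` points with equal moments of orders `0, …, 2K` agree: for every `t`,
the summed coefficients at node `t` coincide. -/
theorem stmt_5 {K : ℕ} (z zhat : Fin K → ℝ) (h hhat : Fin K → ℝ)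
    (hnz : ∀ j, h j ≠ 0) (hnzhat : ∀ j, hhat j ≠ 0)
    (hmom : ∀ s : ℕ, s ≤ 2 * K →
      ∑ j, h j * z j ^ s = ∑ j, hhat j * zhat j ^ s) :
    ∀ t : ℝ,
      ∑ j ∈ Finset.univ.filter (fun j => z j = t), h j
        = ∑ j ∈ Finset.univ.filter (fun j => zhat j = t), hhat j :=
  stmt_5_general z zhat h hhat hmom
end

section
/- Define H₁ = I₂ (the 2×2 identity) and H₂ the 2×2 matrix with all entries 1/2, and y = (0,0). For any functions φ, ψ : ℝ^d → ℝ^d applied entrywise per antenna, the iterative scheme F_rx ← Φ(F_rx), F_tx ← Hᵀ F_rx, F_tx ← Ψ(F_tx), F_rx ← H F_tx initialized with F_rx = y produces identical outputs for (H₁, y) and (H₂, y) after any number of iterations. -/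
open Matrix

/-- One iteration of the per-antenna scheme:
`F_rx ← Φ(F_rx)`, `F_tx ← Hᵀ F_rx`, `F_tx ← Ψ(F_tx)`, `F_rx ← H F_tx`,
where `φ` (resp. `ψ`) is applied identically to each receive (resp. transmit)
antenna feature vector. -/
def channelStep {d : ℕ} (φ ψ : (Fin d → ℝ) → (Fin d → ℝ))
    (H : Matrix (Fin 2) (Fin 2) ℝ) (Frx : Fin 2 → Fin d → ℝ) :
    Fin 2 → Fin d → ℝ :=
  let Frx' : Fin 2 → Fin d → ℝ := fun i => φ (Frx i)
  let Ftx : Fin 2 → Fin d → ℝ := fun i k => ∑ j, Hᵀ i j * Frx' j k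
  let Ftx' : Fin 2 → Fin d → ℝ := fun i => ψ (Ftx i)
  fun i k => ∑ j, H i j * Ftx' j k

/-! Both channels have all row and column sums equal to `1`, so a feature matrix whose rows
all equal `v` is sent to one whose rows all equal `ψ (φ v)`; starting from the constant
input `y = 0`, both runs therefore stay equal to `(ψ ∘ φ)^[n] 0` in every row. -/

section ChannelStep

variable {d : ℕ} (φ ψ : (Fin d → ℝ) → (Fin d → ℝ)) {H : Matrix (Fin 2) (Fin 2) ℝ}

theorem channelStep_const (hrow : ∀ i, ∑ j, H i j = 1) (hcol : ∀ j, ∑ i, H i j = 1)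
    (v : Fin d → ℝ) :
    channelStep φ ψ H (fun _ => v) = fun _ => ψ (φ v) := by
  ext i k
  simp only [channelStep, transpose_apply, ← Finset.sum_mul, hcol, hrow, one_mul]

theorem iterate_channelStep_const (hrow : ∀ i, ∑ j, H i j = 1)
    (hcol : ∀ j, ∑ i, H i j = 1) (n : ℕ) (v : Fin d → ℝ) :
    (channelStep φ ψ H)^[n] (fun _ => v) = fun _ => (ψ ∘ φ)^[n] v :=
  (Function.Semiconj.iterate_right (f := fun v (_ : Fin 2) => v)
    (fun v => (channelStep_const φ ψ hrow hcol v).symm) n v).symm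

end ChannelStep

/-- With `H₁ = I₂`, `H₂` the all-`1/2` matrix, and `y = (0,0)`, the iterative
per-antenna scheme produces identical outputs for `(H₁, y)` and `(H₂, y)`
after any number of iterations, for any per-antenna functions `φ, ψ`. -/
theorem stmt_8 {d : ℕ} (φ ψ : (Fin d → ℝ) → (Fin d → ℝ)) (n : ℕ) :
    (channelStep φ ψ (1 : Matrix (Fin 2) (Fin 2) ℝ))^[n]
        (fun _ _ => (0 : ℝ))
      = (channelStep φ ψ (Matrix.of fun _ _ => (1 / 2 : ℝ)))^[n]
        (fun _ _ => (0 : ℝ)) := by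
  have hone_row : ∀ i, ∑ j, (1 : Matrix (Fin 2) (Fin 2) ℝ) i j = 1 := by
    simp [one_apply]
  have hone_col : ∀ j, ∑ i, (1 : Matrix (Fin 2) (Fin 2) ℝ) i j = 1 := by
    simp [one_apply]
  have hhalf : ∑ _ : Fin 2, (1 / 2 : ℝ) = 1 := by norm_num
  rw [iterate_channelStep_const φ ψ hone_row hone_col,
    iterate_channelStep_const (H := of fun _ _ => 1 / 2) φ ψ (fun _ => hhalf) (fun _ => hhalf)]
end
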